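/- arXiv:2502.07231 — 2 statements merged into one kernel-verified Lean document; each statement's English description precedes it below -/
import Mathlib

section
/- Let u, v, w be vectors in a real inner product space with w ≠ 0, ‖u‖ ≤ M, ‖v‖ ≤ M, and ⟨w, u⟩ = ⟨w, v⟩ = z. Then ‖u - v‖² ≤ 4M² - 4z²/‖w‖². -/
/-! By the parallelogram law, `‖u - v‖² = 2‖u‖² + 2‖v‖² - ‖u + v‖² ≤ 4M² - ‖u + v‖²`, and by
Cauchy–Schwarz `‖u + v‖² ≥ ⟪w, u + v⟫² / ‖w‖² = 4z² / ‖w‖²`. -/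

section

open RealInnerProductSpace

variable {E : Type*} [NormedAddCommGroup E] [InnerProductSpace ℝ E]

theorem sq_real_inner_div_norm_sq_le (w x : E) : ⟪w, x⟫ ^ 2 / ‖w‖ ^ 2 ≤ ‖x‖ ^ 2 := by
  refine div_le_of_le_mul₀ (sq_nonneg _) (sq_nonneg _) ?_
  rw [mul_comm (‖x‖ ^ 2), ← mul_pow, ← sq_abs]
  exact pow_le_pow_left₀ (abs_nonneg _) (abs_real_inner_le_norm w x) 2

theorem norm_sub_sq_le_of_real_inner_add (u v w : E) :
    ‖u - v‖ ^ 2 ≤ 2 * ‖u‖ ^ 2 + 2 * ‖v‖ ^ 2 - ⟪w, u + v⟫ ^ 2 / ‖w‖ ^ 2 := by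
  have hpar := parallelogram_law_with_norm ℝ u v
  linarith [sq_real_inner_div_norm_sq_le w (u + v)]

end

open RealInnerProductSpace in
theorem stmt_6_general {E : Type*} [NormedAddCommGroup E] [InnerProductSpace ℝ E]
    (u v w : E) (M z : ℝ)
    (hu : ‖u‖ ≤ M) (hv : ‖v‖ ≤ M)
    (hzu : ⟪w, u⟫ = z) (hzv : ⟪w, v⟫ = z) :
    ‖u - v‖ ^ 2 ≤ 4 * M ^ 2 - 4 * z ^ 2 / ‖w‖ ^ 2 := by
  have hsum : ⟪w, u + v⟫ = 2 * z := by rw [inner_add_right, hzu, hzv]; ring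
  have hu2 : ‖u‖ ^ 2 ≤ M ^ 2 := pow_le_pow_left₀ (norm_nonneg u) hu 2
  have hv2 : ‖v‖ ^ 2 ≤ M ^ 2 := pow_le_pow_left₀ (norm_nonneg v) hv 2
  have hbound := norm_sub_sq_le_of_real_inner_add u v w
  rw [hsum, mul_pow, mul_div_assoc] at hbound
  rw [mul_div_assoc]
  linarith

open RealInnerProductSpace in
theorem stmt_6 {E : Type*} [NormedAddCommGroup E] [InnerProductSpace ℝ E]
    (u v w : E) (M z : ℝ) (hM : 0 ≤ M) (hw : w ≠ 0)
    (hu : ‖u‖ ≤ M) (hv : ‖v‖ ≤ M)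
    (hzu : ⟪w, u⟫ = z) (hzv : ⟪w, v⟫ = z) :
    ‖u - v‖ ^ 2 ≤ 4 * M ^ 2 - 4 * z ^ 2 / ‖w‖ ^ 2 :=
  stmt_6_general u v w M z hu hv hzu hzv
end

section
/- Under the hypotheses of Theorem 1, if additionally |log((1-p)/p)| ≥ M·‖w‖·√(1-ε) for some ε ∈ [0,1], then ‖u - v‖² ≤ 4M²ε. -/
/-!
The sigmoid is injective with inverse `p ↦ -log ((1 - p) / p)`, so `u` and `v` lie on one
hyperplane `⟪w, ·⟫ = t` with `|t| = |log ((1 - p) / p)| ≥ M ‖w‖ √(1 - ε)`. That hyperplane is at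
distance `|t| / ‖w‖ ≥ M √(1 - ε)` from the origin, so it meets the ball of radius `M` in a disc
of radius at most `M √ε`, whose diameter squared is at most `4 M² ε`.
-/

open RealInnerProductSpace

lemma Real.log_one_sub_sigmoid_div_sigmoid (x : ℝ) :
    Real.log ((1 - Real.sigmoid x) / Real.sigmoid x) = -x := by
  rw [← Real.sigmoid_neg, ← Real.sigmoid_mul_rexp_neg,
    mul_div_cancel_left₀ _ (Real.sigmoid_pos x).ne', Real.log_exp]

section Projection

variable {E : Type*} [NormedAddCommGroup E] [InnerProductSpace ℝ E]

lemma norm_sub_inner_div_smul_sq (w x : E) :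
    ‖x - (⟪w, x⟫ / ‖w‖ ^ 2) • w‖ ^ 2 = ‖x‖ ^ 2 - ⟪w, x⟫ ^ 2 / ‖w‖ ^ 2 := by
  rcases eq_or_ne w 0 with rfl | hw
  · simp
  have hw2 : ‖w‖ ^ 2 ≠ 0 := by positivity
  rw [norm_sub_sq_real, real_inner_smul_right, norm_smul, real_inner_comm, mul_pow,
    Real.norm_eq_abs, sq_abs]
  field_simp
  ring

lemma norm_sub_sq_le_of_inner_eq {w x y : E} {M : ℝ} (hx : ‖x‖ ≤ M) (hy : ‖y‖ ≤ M)
    (hxy : ⟪w, x⟫ = ⟪w, y⟫) :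
    ‖x - y‖ ^ 2 ≤ 4 * (M ^ 2 - ⟪w, x⟫ ^ 2 / ‖w‖ ^ 2) := by
  have hx' : ‖x - (⟪w, x⟫ / ‖w‖ ^ 2) • w‖ ^ 2 ≤ M ^ 2 - ⟪w, x⟫ ^ 2 / ‖w‖ ^ 2 := by
    rw [norm_sub_inner_div_smul_sq]
    gcongr
  have hy' : ‖y - (⟪w, x⟫ / ‖w‖ ^ 2) • w‖ ^ 2 ≤ M ^ 2 - ⟪w, x⟫ ^ 2 / ‖w‖ ^ 2 := by
    rw [hxy, norm_sub_inner_div_smul_sq]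
    gcongr
  set c := ⟪w, x⟫ / ‖w‖ ^ 2
  calc ‖x - y‖ ^ 2 = ‖(x - c • w) - (y - c • w)‖ ^ 2 := by rw [sub_sub_sub_cancel_right]
    _ ≤ (‖x - c • w‖ + ‖y - c • w‖) ^ 2 := by gcongr; exact norm_sub_le _ _
    _ ≤ 2 * (‖x - c • w‖ ^ 2 + ‖y - c • w‖ ^ 2) := add_sq_le
    _ ≤ 4 * (M ^ 2 - ⟪w, x⟫ ^ 2 / ‖w‖ ^ 2) := by linarith

end Projection

open RealInnerProductSpace in
theorem stmt_10_general {E : Type*} [NormedAddCommGroup E] [InnerProductSpace ℝ E]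
    (σ : ℝ → ℝ) (hσ : ∀ z, σ z = 1 / (1 + Real.exp (-z)))
    (u v w : E) (M p ε : ℝ) (hw : w ≠ 0)
    (hu : ‖u‖ ≤ M) (hv : ‖v‖ ≤ M)
    (hpu : σ ⟪w, u⟫ = p) (hpv : σ ⟪w, v⟫ = p)
    (hε1 : ε ≤ 1)
    (hlog : M * ‖w‖ * Real.sqrt (1 - ε) ≤ |Real.log ((1 - p) / p)|) :
    ‖u - v‖ ^ 2 ≤ 4 * M ^ 2 * ε := by
  have hσ : σ = Real.sigmoid := funext fun z => by rw [hσ, one_div, Real.sigmoid_def]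
  subst hσ hpu
  have hinner : ⟪w, u⟫ = ⟪w, v⟫ := Real.sigmoid_injective hpv.symm
  rw [Real.log_one_sub_sigmoid_div_sigmoid, abs_neg] at hlog
  have hM : 0 ≤ M := (norm_nonneg u).trans hu
  have hlevel : M ^ 2 * (1 - ε) ≤ ⟪w, u⟫ ^ 2 / ‖w‖ ^ 2 := by
    rw [le_div_iff₀ (by positivity), ← sq_abs ⟪w, u⟫]
    calc M ^ 2 * (1 - ε) * ‖w‖ ^ 2 = (M * ‖w‖ * Real.sqrt (1 - ε)) ^ 2 := by
          rw [mul_pow, mul_pow, Real.sq_sqrt (by linarith)]; ring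
      _ ≤ |⟪w, u⟫| ^ 2 := by gcongr
  linarith [norm_sub_sq_le_of_inner_eq hu hv hinner]

open RealInnerProductSpace in
theorem stmt_10 {E : Type*} [NormedAddCommGroup E] [InnerProductSpace ℝ E]
    (σ : ℝ → ℝ) (hσ : ∀ z, σ z = 1 / (1 + Real.exp (-z)))
    (u v w : E) (M p ε : ℝ) (hM : 0 ≤ M) (hw : w ≠ 0)
    (hu : ‖u‖ ≤ M) (hv : ‖v‖ ≤ M)
    (hp : 0 < p) (hp1 : p < 1)
    (hpu : σ ⟪w, u⟫ = p) (hpv : σ ⟪w, v⟫ = p)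
    (hε0 : 0 ≤ ε) (hε1 : ε ≤ 1)
    (hlog : M * ‖w‖ * Real.sqrt (1 - ε) ≤ |Real.log ((1 - p) / p)|) :
    ‖u - v‖ ^ 2 ≤ 4 * M ^ 2 * ε :=
  stmt_10_general σ hσ u v w M p ε hw hu hv hpu hpv hε1 hlog
end
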